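/- arXiv:1711.07795 — 4 statements merged into one kernel-verified Lean document; each statement's English description precedes it below -/
import Mathlib

section
/- Let X and Y be nonsingular BV algebras and let α : X → Y be a canonical map with logarithmic Jacobian r_α. Then r_α satisfies the quantum master equation Δ_Y r_α + (1/2)(r_α, r_α)_Y = 0. -/
/-!
Common setup: real unital ℤ-graded (graded-)commutative algebras, BV Laplacians,
BV brackets, BV algebra structures, canonical maps and master actions.
-/

/-- Graded commutativity with Koszul signs: `f * g = (-1)^{|f||g|} g * f`
for homogeneous `f`, `g`. -/
def GradedComm {X : Type*} [Ring X] [Algebra ℝ X] (𝒜 : ℤ → Submodule ℝ X) : Prop :=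
  ∀ (i j : ℤ) (f g : X), f ∈ 𝒜 i → g ∈ 𝒜 j → f * g = ((-1 : ℝ) ^ (i * j)) • (g * f)

/-- `D` is a BV Laplacian on the ℤ-graded algebra `X` with grading `𝒜`:
it raises degree by `1`, is a second-order differential operator
(seven-term identity on homogeneous elements), squares to zero and kills `1`. -/
def IsBVLaplacian {X : Type*} [Ring X] [Algebra ℝ X]
    (𝒜 : ℤ → Submodule ℝ X) (D : X →ₗ[ℝ] X) : Prop :=
  (∀ (i : ℤ) (f : X), f ∈ 𝒜 i → D f ∈ 𝒜 (i + 1)) ∧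
  (∀ (i j k : ℤ) (f g h : X), f ∈ 𝒜 i → g ∈ 𝒜 j → h ∈ 𝒜 k →
    D (f * g * h) =
      -(D f * g * h) - ((-1 : ℝ) ^ i) • (f * D g * h)
        - ((-1 : ℝ) ^ (i + j)) • (f * g * D h)
        + D (f * g) * h + ((-1 : ℝ) ^ ((i + 1) * j)) • (g * D (f * h))
        + ((-1 : ℝ) ^ i) • (f * D (g * h))) ∧
  (∀ f : X, D (D f) = 0) ∧
  D 1 = 0

/-- `Br` is the BV bracket associated with the Laplacian `D`: it is the bilinear
map given on homogeneous `f`, `g` by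
`(f,g) = (-1)^{|f|} (D(fg) - (Df)g - (-1)^{|f|} f(Dg))`. -/
def IsBVBracketOf {X : Type*} [Ring X] [Algebra ℝ X]
    (𝒜 : ℤ → Submodule ℝ X) (D : X →ₗ[ℝ] X) (Br : X →ₗ[ℝ] X →ₗ[ℝ] X) : Prop :=
  ∀ (i j : ℤ) (f g : X), f ∈ 𝒜 i → g ∈ 𝒜 j →
    Br f g = ((-1 : ℝ) ^ i) • (D (f * g) - D f * g - ((-1 : ℝ) ^ i) • (f * D g))

/-- A BV algebra structure on the ℤ-graded algebra `X` with grading `𝒜`: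
graded commutativity, a BV Laplacian `Δ` and its associated BV bracket. -/
structure BVAlgebraStr (X : Type*) [Ring X] [Algebra ℝ X]
    (𝒜 : ℤ → Submodule ℝ X) where
  grcomm : GradedComm 𝒜
  Δ : X →ₗ[ℝ] X
  isBVLaplacian : IsBVLaplacian 𝒜 Δ
  bracket : X →ₗ[ℝ] X →ₗ[ℝ] X
  isBracket : IsBVBracketOf 𝒜 Δ bracket

/-- The bracket `Br` is nonsingular: its center is exactly `ℝ·1`. -/
def IsNonsingularBracket {X : Type*} [Ring X] [Algebra ℝ X]
    (Br : X →ₗ[ℝ] X →ₗ[ℝ] X) : Prop :=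
  ∀ c : X, (∀ f : X, Br f c = 0) ↔ ∃ r : ℝ, c = algebraMap ℝ X r

/-- `α` is a canonical map with logarithmic Jacobian `r`: a degree-preserving
isomorphism of unital algebras with `Δ_Y(αf) - α(Δ_X f) + (r, αf)_Y = 0`,
where `r` has degree `0`. -/
def IsCanonicalWithJacobian {X Y : Type*} [Ring X] [Algebra ℝ X] [Ring Y] [Algebra ℝ Y]
    (𝒜 : ℤ → Submodule ℝ X) (ℬ : ℤ → Submodule ℝ Y)
    (ΔX : X →ₗ[ℝ] X) (ΔY : Y →ₗ[ℝ] Y) (BrY : Y →ₗ[ℝ] Y →ₗ[ℝ] Y)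
    (α : X ≃ₐ[ℝ] Y) (r : Y) : Prop :=
  (∀ (i : ℤ) (f : X), f ∈ 𝒜 i → α f ∈ ℬ i) ∧ r ∈ ℬ 0 ∧
  (∀ f : X, ΔY (α f) - α (ΔX f) + BrY r (α f) = 0)

/-- `ξ` is an infinitesimal canonical map with logarithmic Jacobian `e`:
a degree-`0` derivation with `Δ(ξf) - ξ(Δf) + (e, f) = 0`, `e` of degree `0`. -/
def IsInfCanonicalWithJacobian {X : Type*} [Ring X] [Algebra ℝ X]
    {𝒜 : ℤ → Submodule ℝ X} (B : BVAlgebraStr X 𝒜)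
    (ξ : X →ₗ[ℝ] X) (e : X) : Prop :=
  (∀ (i : ℤ) (f : X), f ∈ 𝒜 i → ξ f ∈ 𝒜 i) ∧
  (∀ f g : X, ξ (f * g) = ξ f * g + f * ξ g) ∧
  e ∈ 𝒜 0 ∧
  (∀ f : X, B.Δ (ξ f) - ξ (B.Δ f) + B.bracket e f = 0)

/-- `S` is a BV quantum master action: a degree-`0` element satisfying the
quantum master equation `ΔS + (1/2)(S,S) = 0`. -/
def IsMasterAction {X : Type*} [Ring X] [Algebra ℝ X]
    {𝒜 : ℤ → Submodule ℝ X} (B : BVAlgebraStr X 𝒜) (S : X) : Prop :=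
  S ∈ 𝒜 0 ∧ B.Δ S + (1 / 2 : ℝ) • B.bracket S S = 0

/-!
The defining relation of a canonical map reads `α ∘ Δ_X = (Δ_Y + (r, ·)) ∘ α`, so `Δ_X² = 0`
forces `(Δ_Y + (r, ·))² = 0`. Since `r` has degree `0`, this square is the inner derivation
`(T, ·)` of `T = Δ_Y r + ½ (r, r)`: `Δ_Y` is a derivation of the bracket and
`2 (r, (r, y)) = ((r, r), y)`. By graded antisymmetry the degree-`1` element `T` then lies in the
BV center, which is `ℝ · 1` and sits in degree `0`; hence `T = 0`.
-/

namespace BVAlgebraStr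

variable {Y : Type*} [Ring Y] [Algebra ℝ Y] {ℬ : ℤ → Submodule ℝ Y} (B : BVAlgebraStr Y ℬ)
  {i j k : ℤ} {f g h : Y}

theorem Δ_mem (hf : f ∈ ℬ i) : B.Δ f ∈ ℬ (i + 1) := B.isBVLaplacian.1 i f hf

theorem Δ_Δ (f : Y) : B.Δ (B.Δ f) = 0 := B.isBVLaplacian.2.2.1 f

theorem bracket_eq (hf : f ∈ ℬ i) (hg : g ∈ ℬ j) :
    B.bracket f g = (-1 : ℝ) ^ i • (B.Δ (f * g) - B.Δ f * g - (-1 : ℝ) ^ i • (f * B.Δ g)) :=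
  B.isBracket i j f g hf hg

theorem Δ_mul_mul (hf : f ∈ ℬ i) (hg : g ∈ ℬ j) (hh : h ∈ ℬ k) :
    B.Δ (f * g * h) =
      -(B.Δ f * g * h) - ((-1 : ℝ) ^ i) • (f * B.Δ g * h)
        - ((-1 : ℝ) ^ (i + j)) • (f * g * B.Δ h)
        + B.Δ (f * g) * h + ((-1 : ℝ) ^ ((i + 1) * j)) • (g * B.Δ (f * h))
        + ((-1 : ℝ) ^ i) • (f * B.Δ (g * h)) :=
  B.isBVLaplacian.2.1 i j k f g h hf hg hh

theorem Δ_bracket (hf : f ∈ ℬ i) (hg : g ∈ ℬ j) :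
    B.Δ (B.bracket f g) = B.bracket (B.Δ f) g - (-1 : ℝ) ^ i • B.bracket f (B.Δ g) := by
  rw [B.bracket_eq hf hg, B.bracket_eq (B.Δ_mem hf) hg, B.bracket_eq hf (B.Δ_mem hg),
    zpow_add_one₀ (by norm_num)]
  simp only [map_smul, map_sub, Δ_Δ, mul_zero, zero_mul]
  module

theorem bracket_comm (hf : f ∈ ℬ i) (hg : g ∈ ℬ j) :
    B.bracket f g = -(-1 : ℝ) ^ ((i + 1) * (j + 1)) • B.bracket g f := by
  have hgf := B.grcomm j i g f hg hf
  have hΔgf := B.grcomm (j + 1) i (B.Δ g) f (B.Δ_mem hg) hf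
  have hgΔf := B.grcomm j (i + 1) g (B.Δ f) hg (B.Δ_mem hf)
  rw [B.bracket_eq hf hg, B.bracket_eq hg hf, hgf, hΔgf, hgΔf, map_smul]
  by_cases hi : Even i <;> by_cases hj : Even j <;>
    simp +decide only [neg_one_zpow_eq_ite, Int.even_add, Int.even_mul, hi, hj, ↓reduceIte] <;>
    module

section GradedMul

variable [SetLike.GradedMul ℬ]

theorem bracket_mem (hf : f ∈ ℬ i) (hg : g ∈ ℬ j) : B.bracket f g ∈ ℬ (i + j + 1) := by
  have hfg := SetLike.mul_mem_graded hf hg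
  have hΔf := SetLike.mul_mem_graded (B.Δ_mem hf) hg
  have hfΔg := SetLike.mul_mem_graded hf (B.Δ_mem hg)
  rw [B.bracket_eq hf hg]
  refine Submodule.smul_mem _ _ (sub_mem (sub_mem (B.Δ_mem hfg) ?_) (Submodule.smul_mem _ _ ?_))
  · rwa [add_right_comm] at hΔf
  · rwa [← add_assoc] at hfΔg

theorem bracket_mul (hf : f ∈ ℬ i) (hg : g ∈ ℬ j) (hh : h ∈ ℬ k) :
    B.bracket f (g * h) = B.bracket f g * h + (-1 : ℝ) ^ ((i + 1) * j) • (g * B.bracket f h) := by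
  have hgΔf := B.grcomm j (i + 1) g (B.Δ f) hg (B.Δ_mem hf)
  have hgf := B.grcomm j i g f hg hf
  rw [B.bracket_eq hf (SetLike.mul_mem_graded hg hh), B.bracket_eq hf hg, B.bracket_eq hf hh,
    ← mul_assoc, B.Δ_mul_mul hf hg hh]
  simp only [mul_sub, sub_mul, mul_smul_comm, smul_mul_assoc, ← mul_assoc, hgΔf, hgf]
  by_cases hi : Even i <;> by_cases hj : Even j <;>
    simp +decide only [neg_one_zpow_eq_ite, Int.even_add, Int.even_mul, hi, hj, ↓reduceIte] <;>
    module

/-- `(r, ·)` is a graded derivation of the product and `Δ` one of the bracket; expanding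
`(r, (r, y))` through `(r, y) = Δ(ry) - (Δr)y - rΔy` with these rules yields
`((r, r), y) - (r, (r, y))`. -/
theorem two_smul_bracket_bracket {r y : Y} (hr : r ∈ ℬ 0) (hy : y ∈ ℬ i) :
    (2 : ℝ) • B.bracket r (B.bracket r y) = B.bracket (B.bracket r r) y := by
  have hΔr : B.Δ r ∈ ℬ 1 := by simpa using B.Δ_mem hr
  have hry : r * y ∈ ℬ i := by simpa using SetLike.mul_mem_graded hr hy
  have hrr : B.bracket r r ∈ ℬ 1 := by simpa using B.bracket_mem hr hr
  have h_r_ry : B.bracket r (B.bracket r y) =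
      B.bracket r (B.Δ (r * y)) - B.bracket r (B.Δ r * y) - B.bracket r (r * B.Δ y) := by
    rw [B.bracket_eq hr hy]
    simp only [zpow_zero, one_smul, map_sub]
  have h_r_Δry : B.bracket r (B.Δ (r * y)) = B.bracket (B.Δ r) r * y + r * B.bracket (B.Δ r) y
      - B.Δ (B.bracket r r * y) - B.Δ (r * B.bracket r y) := by
    have h := B.Δ_bracket hr hry
    rw [B.bracket_mul hΔr hr hy, B.bracket_mul hr hr hy, map_add] at h
    norm_num at h
    linear_combination (norm := module) h
  have h_r_Δr_y := B.bracket_mul hr hΔr hy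
  have h_r_rΔy := B.bracket_mul hr hr (B.Δ_mem hy)
  have h_Δ_r_ry := B.bracket_eq hr (by simpa using B.bracket_mem hr hy)
  have h_Δ_ry : r * B.Δ (B.bracket r y) = r * B.bracket (B.Δ r) y - r * B.bracket r (B.Δ y) := by
    rw [B.Δ_bracket hr hy, mul_sub]; norm_num
  have h_Δ_rr : B.Δ (B.bracket r r) * y = B.bracket (B.Δ r) r * y - B.bracket r (B.Δ r) * y := by
    rw [B.Δ_bracket hr hr, sub_mul]; norm_num
  have h_rr_y := B.bracket_eq hrr hy
  norm_num at h_r_Δr_y h_r_rΔy h_Δ_r_ry h_rr_y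
  linear_combination (norm := module)
    h_r_ry + h_r_Δry - h_r_Δr_y - h_r_rΔy + h_Δ_r_ry - h_Δ_ry - h_Δ_rr - h_rr_y

theorem bracket_Δ_add_half_bracket {r y : Y} (hr : r ∈ ℬ 0) (hy : y ∈ ℬ i) :
    B.bracket (B.Δ r + (1 / 2 : ℝ) • B.bracket r r) y =
      B.Δ (B.Δ y + B.bracket r y) + B.bracket r (B.Δ y + B.bracket r y) := by
  rw [map_add, map_smul, LinearMap.add_apply, LinearMap.smul_apply,
    ← B.two_smul_bracket_bracket hr hy, map_add, map_add, Δ_Δ, B.Δ_bracket hr hy]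
  norm_num
  module

end GradedMul

theorem eq_zero_of_bracket_eq_zero [GradedAlgebra ℬ] (hB : IsNonsingularBracket B.bracket)
    {T : Y} (hT : T ∈ ℬ i) (hi : i ≠ 0)
    (h : ∀ {j : ℤ} {g : Y}, g ∈ ℬ j → B.bracket T g = 0) : T = 0 := by
  have hcentral : ∀ g, B.bracket g T = 0 := by
    refine DirectSum.Decomposition.inductionOn ℬ (by simp) (fun g => ?_)
      (fun g g' hg hg' => by rw [map_add, LinearMap.add_apply, hg, hg', add_zero])
    rw [B.bracket_comm g.2 hT, h g.2, smul_zero]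
  obtain ⟨c, hc⟩ := (hB T).1 hcentral
  by_contra hT0
  exact hi (DirectSum.degree_eq_of_mem_mem ℬ hT (hc ▸ SetLike.algebraMap_mem_graded ℬ c) hT0)

end BVAlgebraStr

theorem IsCanonicalWithJacobian.Δ_add_bracket_sq_eq_zero {X Y : Type*} [Ring X] [Algebra ℝ X]
    [Ring Y] [Algebra ℝ Y] {𝒜 : ℤ → Submodule ℝ X} {ℬ : ℤ → Submodule ℝ Y}
    {ΔX : X →ₗ[ℝ] X} {ΔY : Y →ₗ[ℝ] Y} {BrY : Y →ₗ[ℝ] Y →ₗ[ℝ] Y} {α : X ≃ₐ[ℝ] Y} {r : Y}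
    (hα : IsCanonicalWithJacobian 𝒜 ℬ ΔX ΔY BrY α r) (hΔX : ∀ f, ΔX (ΔX f) = 0) (y : Y) :
    ΔY (ΔY y + BrY r y) + BrY r (ΔY y + BrY r y) = 0 := by
  have hconj : ∀ f, α (ΔX f) = ΔY (α f) + BrY r (α f) := fun f => by
    linear_combination (norm := module) -hα.2.2 f
  obtain ⟨f, rfl⟩ := α.surjective y
  rw [← hconj, ← hconj, hΔX, map_zero]

theorem stmt2_general {X Y : Type*} [Ring X] [Algebra ℝ X] [Ring Y] [Algebra ℝ Y]
    (𝒜 : ℤ → Submodule ℝ X)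
    (ℬ : ℤ → Submodule ℝ Y) [GradedAlgebra ℬ]
    (BX : BVAlgebraStr X 𝒜) (BY : BVAlgebraStr Y ℬ)
    (hY : IsNonsingularBracket BY.bracket)
    (α : X ≃ₐ[ℝ] Y) (r : Y)
    (hcan : IsCanonicalWithJacobian 𝒜 ℬ BX.Δ BY.Δ BY.bracket α r) :
    BY.Δ r + (1 / 2 : ℝ) • BY.bracket r r = 0 := by
  have hr : r ∈ ℬ 0 := hcan.2.1
  have hT : BY.Δ r + (1 / 2 : ℝ) • BY.bracket r r ∈ ℬ 1 :=
    add_mem (by simpa using BY.Δ_mem hr)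
      (Submodule.smul_mem _ _ (by simpa using BY.bracket_mem hr hr))
  refine BY.eq_zero_of_bracket_eq_zero hY hT one_ne_zero fun hy => ?_
  rw [BY.bracket_Δ_add_half_bracket hr hy]
  exact hcan.Δ_add_bracket_sq_eq_zero BX.Δ_Δ _

/-- the logarithmic Jacobian of a canonical map satisfies the
quantum master equation. -/
theorem stmt2 {X Y : Type*} [Ring X] [Algebra ℝ X] [Ring Y] [Algebra ℝ Y]
    (𝒜 : ℤ → Submodule ℝ X) [GradedAlgebra 𝒜]
    (ℬ : ℤ → Submodule ℝ Y) [GradedAlgebra ℬ]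
    (BX : BVAlgebraStr X 𝒜) (BY : BVAlgebraStr Y ℬ)
    (hX : IsNonsingularBracket BX.bracket) (hY : IsNonsingularBracket BY.bracket)
    (α : X ≃ₐ[ℝ] Y) (r : Y)
    (hcan : IsCanonicalWithJacobian 𝒜 ℬ BX.Δ BY.Δ BY.bracket α r) :
    BY.Δ r + (1 / 2 : ℝ) • BY.bracket r r = 0 :=
  stmt2_general 𝒜 ℬ BX BY hY α r hcan
end

section
/- Let X and Y be nonsingular BV algebras and let α : X → Y be a canonical map. Then α preserves BV brackets: α((f,g)_X) = (αf, αg)_Y for all f, g ∈ X. -/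
/-!
Writing the canonical-map condition as `α (Δ_X h) = Δ_Y (α h) + (r, α h)`, both brackets
`α (f, g)_X` and `(α f, α g)_Y` expand into the same Laplacian terms, except that the former
picks up the extra terms `(r, α f α g) - (r, α f) α g - (-1)^{|f|} α f (r, α g)`. These cancel
because bracketing with the degree-`0` element `r` is a derivation: the seven-term identity
for `Δ (r F G)` is exactly this Leibniz rule.
-/

lemma neg_one_zpow_mul_self (i : ℤ) : (-1 : ℝ) ^ i * (-1 : ℝ) ^ i = 1 := by
  rw [← mul_zpow]
  norm_num

theorem LinearMap.ext₂_of_mem_graded {ι R M N P : Type*} [DecidableEq ι] [CommSemiring R]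
    [AddCommMonoid M] [Module R M] [AddCommMonoid N] [Module R N] [AddCommMonoid P] [Module R P]
    (𝒜 : ι → Submodule R M) [DirectSum.Decomposition 𝒜]
    (ℬ : ι → Submodule R N) [DirectSum.Decomposition ℬ] {φ ψ : M →ₗ[R] N →ₗ[R] P}
    (h : ∀ (i j : ι) (f : M) (g : N), f ∈ 𝒜 i → g ∈ ℬ j → φ f g = ψ f g) : φ = ψ := by
  ext f g
  induction f using DirectSum.Decomposition.inductionOn 𝒜 with
  | zero => simp
  | add f₁ f₂ ih₁ ih₂ => simp only [map_add, LinearMap.add_apply, ih₁, ih₂]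
  | homogeneous f =>
    induction g using DirectSum.Decomposition.inductionOn ℬ with
    | zero => simp
    | add g₁ g₂ ih₁ ih₂ => simp only [map_add, ih₁, ih₂]
    | homogeneous g => exact h _ _ f g f.2 g.2

namespace BVAlgebraStr

variable {Y : Type*} [Ring Y] [Algebra ℝ Y] {ℬ : ℤ → Submodule ℝ Y} [SetLike.GradedMul ℬ]

theorem bracket_mul_of_mem_zero (B : BVAlgebraStr Y ℬ) {r : Y} (hr : r ∈ ℬ 0)
    {i j : ℤ} {F G : Y} (hF : F ∈ ℬ i) (hG : G ∈ ℬ j) :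
    B.bracket r (F * G) = B.bracket r F * G + (-1 : ℝ) ^ i • (F * B.bracket r G) := by
  have hΔr : B.Δ r ∈ ℬ 1 := by simpa using B.isBVLaplacian.1 0 r hr
  have hΔrF : F * B.Δ r = (-1 : ℝ) ^ i • (B.Δ r * F) := by
    simpa using B.grcomm i 1 F (B.Δ r) hF hΔr
  have hrF : F * r = r * F := by simpa using B.grcomm i 0 F r hF hr
  have hseven := B.isBVLaplacian.2.1 0 i j r F G hr hF hG
  simp only [zpow_zero, one_smul, zero_add, one_mul] at hseven
  have hrFG := B.isBracket 0 (i + j) r (F * G) hr (SetLike.GradedMul.mul_mem hF hG)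
  simp only [B.isBracket 0 i r F hr hF, B.isBracket 0 j r G hr hG, zpow_zero, one_smul] at hrFG ⊢
  rw [hrFG, ← mul_assoc, hseven]
  simp only [mul_sub, sub_mul, smul_sub]
  rw [← mul_assoc F (B.Δ r), ← mul_assoc F r, hΔrF, hrF]
  simp only [smul_mul_assoc, smul_smul, neg_one_zpow_mul_self, one_smul, mul_assoc]
  abel

variable {X : Type*} [Ring X] [Algebra ℝ X] {𝒜 : ℤ → Submodule ℝ X}

theorem map_bracket_of_mem_graded (BX : BVAlgebraStr X 𝒜) (BY : BVAlgebraStr Y ℬ)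
    (α : X →ₐ[ℝ] Y) {r : Y} (hr : r ∈ ℬ 0)
    (hΔ : ∀ h : X, α (BX.Δ h) = BY.Δ (α h) + BY.bracket r (α h))
    {i j : ℤ} {f g : X} (hf : f ∈ 𝒜 i) (hg : g ∈ 𝒜 j) (hαf : α f ∈ ℬ i) (hαg : α g ∈ ℬ j) :
    α (BX.bracket f g) = BY.bracket (α f) (α g) := by
  rw [BX.isBracket i j f g hf hg, BY.isBracket i j (α f) (α g) hαf hαg]
  simp only [map_smul, map_sub, map_mul, hΔ, BY.bracket_mul_of_mem_zero hr hαf hαg]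
  simp only [smul_sub, smul_add, add_mul, mul_add, smul_smul, neg_one_zpow_mul_self, one_smul]
  abel

end BVAlgebraStr

theorem stmt3_general {X Y : Type*} [Ring X] [Algebra ℝ X] [Ring Y] [Algebra ℝ Y]
    (𝒜 : ℤ → Submodule ℝ X) [GradedAlgebra 𝒜]
    (ℬ : ℤ → Submodule ℝ Y) [GradedAlgebra ℬ]
    (BX : BVAlgebraStr X 𝒜) (BY : BVAlgebraStr Y ℬ)
    (α : X ≃ₐ[ℝ] Y) (r : Y)
    (hcan : IsCanonicalWithJacobian 𝒜 ℬ BX.Δ BY.Δ BY.bracket α r) :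
    ∀ f g : X, α (BX.bracket f g) = BY.bracket (α f) (α g) := by
  obtain ⟨hdeg, hr, hΔ⟩ := hcan
  have hΔ' (h : X) : α (BX.Δ h) = BY.Δ (α h) + BY.bracket r (α h) :=
    (sub_eq_zero.mp <| (sub_add_eq_add_sub _ _ _).symm.trans (hΔ h)).symm
  have hbilin : BX.bracket.compr₂ α.toLinearMap =
      BY.bracket.compl₁₂ α.toLinearMap α.toLinearMap := by
    refine LinearMap.ext₂_of_mem_graded 𝒜 𝒜 fun i j f g hf hg => ?_
    exact BX.map_bracket_of_mem_graded BY α.toAlgHom hr hΔ' hf hg (hdeg i f hf) (hdeg j g hg)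
  exact fun f g => LinearMap.congr_fun₂ hbilin f g

/-- canonical maps preserve BV brackets. -/
theorem stmt3 {X Y : Type*} [Ring X] [Algebra ℝ X] [Ring Y] [Algebra ℝ Y]
    (𝒜 : ℤ → Submodule ℝ X) [GradedAlgebra 𝒜]
    (ℬ : ℤ → Submodule ℝ Y) [GradedAlgebra ℬ]
    (BX : BVAlgebraStr X 𝒜) (BY : BVAlgebraStr Y ℬ)
    (hX : IsNonsingularBracket BX.bracket) (hY : IsNonsingularBracket BY.bracket)
    (α : X ≃ₐ[ℝ] Y) (r : Y)
    (hcan : IsCanonicalWithJacobian 𝒜 ℬ BX.Δ BY.Δ BY.bracket α r) :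
    ∀ f g : X, α (BX.bracket f g) = BY.bracket (α f) (α g) :=
  stmt3_general 𝒜 ℬ BX BY α r hcan
end

section
/- Let X, Y, Z be nonsingular BV algebras and let α : X → Y and β : Y → Z be canonical maps with logarithmic Jacobians r_α and r_β. Then the composition β∘α : X → Z is a canonical map, and r_β + β(r_α) is a logarithmic Jacobian for β∘α; moreover any two logarithmic Jacobians of β∘α differ by a real multiple of the unit 1_Z. -/
namespace BVAlgebraStr

variable {X : Type*} [Ring X] [Algebra ℝ X] {𝒜 : ℤ → Submodule ℝ X} (B : BVAlgebraStr X 𝒜)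

lemma bracket_swap_of_mem_zero {i : ℤ} {f c : X} (hf : f ∈ 𝒜 i) (hc : c ∈ 𝒜 0) :
    B.bracket f c = (-1 : ℝ) ^ i • B.bracket c f := by
  have hΔf := B.isBVLaplacian.1 i f hf
  have hΔc : B.Δ c ∈ 𝒜 1 := by simpa using B.isBVLaplacian.1 0 c hc
  have hfc : f * c = c * f := by simpa using B.grcomm i 0 f c hf hc
  have hΔfc : B.Δ f * c = c * B.Δ f := by simpa using B.grcomm _ 0 _ c hΔf hc
  have hfΔc : f * B.Δ c = (-1 : ℝ) ^ i • (B.Δ c * f) := by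
    simpa using B.grcomm i 1 f _ hf hΔc
  rw [B.isBracket i 0 f c hf hc, B.isBracket 0 i c f hc hf, hfc, hΔfc, hfΔc, smul_smul,
    neg_one_zpow_mul_self]
  module

lemma bracket_eq_zero_of_forall_bracket_eq_zero [DirectSum.Decomposition 𝒜] {c : X}
    (hc : c ∈ 𝒜 0) (h : ∀ g, B.bracket c g = 0) (f : X) : B.bracket f c = 0 := by
  have hflip : B.bracket.flip c = 0 :=
    DirectSum.decompose_lhom_ext 𝒜 fun i => LinearMap.ext fun ⟨f, hf⟩ => by
      simp [B.bracket_swap_of_mem_zero hf hc, h]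
  exact LinearMap.congr_fun hflip f

lemma bracket_mul_of_mem_zero_s4 [SetLike.GradedMonoid 𝒜] {r : X} (hr : r ∈ 𝒜 0) {i j : ℤ}
    {f g : X} (hf : f ∈ 𝒜 i) (hg : g ∈ 𝒜 j) :
    B.bracket r (f * g) = B.bracket r f * g + (-1 : ℝ) ^ i • (f * B.bracket r g) := by
  have hΔr : B.Δ r ∈ 𝒜 1 := by simpa using B.isBVLaplacian.1 0 r hr
  have hseven := B.isBVLaplacian.2.1 0 i j r f g hr hf hg
  simp only [zpow_zero, one_smul, zero_add, one_mul] at hseven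
  have hfΔr : f * (B.Δ r * g) = (-1 : ℝ) ^ i • (B.Δ r * (f * g)) := by
    rw [← mul_assoc, B.grcomm i 1 f _ hf hΔr, mul_one, smul_mul_assoc, mul_assoc]
  have hfr : f * (r * B.Δ g) = r * (f * B.Δ g) := by
    rw [← mul_assoc, B.grcomm i 0 f r hf hr, mul_zero, zpow_zero, one_smul, mul_assoc]
  rw [B.isBracket 0 _ r _ hr (SetLike.mul_mem_graded hf hg), B.isBracket 0 i r f hr hf,
    B.isBracket 0 j r g hr hg, ← mul_assoc, hseven]
  simp only [zpow_zero, one_smul, mul_assoc, mul_sub, sub_mul, smul_sub, smul_add, smul_smul,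
    hfΔr, hfr, neg_one_zpow_mul_self]
  module

end BVAlgebraStr

namespace IsCanonicalWithJacobian

variable {X Y Z : Type*} [Ring X] [Algebra ℝ X] [Ring Y] [Algebra ℝ Y] [Ring Z] [Algebra ℝ Z]
  {𝒜 : ℤ → Submodule ℝ X} {ℬ : ℤ → Submodule ℝ Y} {𝒞 : ℤ → Submodule ℝ Z}

lemma map_bracket [DirectSum.Decomposition ℬ] [SetLike.GradedMonoid 𝒞]
    (BY : BVAlgebraStr Y ℬ) (BZ : BVAlgebraStr Z 𝒞) {β : Y ≃ₐ[ℝ] Z} {rb : Z}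
    (hβ : IsCanonicalWithJacobian ℬ 𝒞 BY.Δ BZ.Δ BZ.bracket β rb) (u v : Y) :
    β (BY.bracket u v) = BZ.bracket (β u) (β v) := by
  obtain ⟨hdeg, hrb, hΔ⟩ := hβ
  have hΔβ (w : Y) : BZ.Δ (β w) = β (BY.Δ w) - BZ.bracket rb (β w) := by
    rw [eq_sub_iff_add_eq, ← sub_eq_zero, ← hΔ w]
    abel
  have homogeneous {i j : ℤ} {u v : Y} (hu : u ∈ ℬ i) (hv : v ∈ ℬ j) :
      β (BY.bracket u v) = BZ.bracket (β u) (β v) := by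
    rw [BY.isBracket i j u v hu hv, BZ.isBracket i j _ _ (hdeg i u hu) (hdeg j v hv),
      ← map_mul β u v, hΔβ (u * v), hΔβ u, hΔβ v, map_mul β u v,
      BZ.bracket_mul_of_mem_zero_s4 hrb (hdeg i u hu) (hdeg j v hv)]
    simp only [map_smul, map_sub, map_mul, mul_sub, sub_mul, smul_sub, smul_add, smul_smul,
      neg_one_zpow_mul_self, one_smul]
    module
  have hcomp : BY.bracket.compr₂ β.toLinearMap =
      BZ.bracket.compl₁₂ β.toLinearMap β.toLinearMap :=
    DirectSum.decompose_lhom_ext ℬ fun i => LinearMap.ext fun ⟨u, hu⟩ =>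
      DirectSum.decompose_lhom_ext ℬ fun j => LinearMap.ext fun ⟨v, hv⟩ => homogeneous hu hv
  exact LinearMap.congr_fun₂ hcomp u v

theorem trans [DirectSum.Decomposition ℬ] [SetLike.GradedMonoid 𝒞] {ΔX : X →ₗ[ℝ] X}
    (BY : BVAlgebraStr Y ℬ) (BZ : BVAlgebraStr Z 𝒞) {α : X ≃ₐ[ℝ] Y} {β : Y ≃ₐ[ℝ] Z}
    {ra : Y} {rb : Z} (hα : IsCanonicalWithJacobian 𝒜 ℬ ΔX BY.Δ BY.bracket α ra)
    (hβ : IsCanonicalWithJacobian ℬ 𝒞 BY.Δ BZ.Δ BZ.bracket β rb) :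
    IsCanonicalWithJacobian 𝒜 𝒞 ΔX BZ.Δ BZ.bracket (α.trans β) (rb + β ra) := by
  obtain ⟨hdα, hra, hΔα⟩ := hα
  refine ⟨fun i f hf => hβ.1 i _ (hdα i f hf), add_mem hβ.2.1 (hβ.1 0 ra hra), fun f => ?_⟩
  have hΔβα : β (BY.Δ (α f)) - β (α (ΔX f)) + BZ.bracket (β ra) (β (α f)) = 0 := by
    simpa only [map_add, map_sub, map_zero, hβ.map_bracket BY BZ] using congrArg β (hΔα f)
  calc BZ.Δ (β (α f)) - β (α (ΔX f)) + BZ.bracket (rb + β ra) (β (α f))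
      = (BZ.Δ (β (α f)) - β (BY.Δ (α f)) + BZ.bracket rb (β (α f)))
          + (β (BY.Δ (α f)) - β (α (ΔX f)) + BZ.bracket (β ra) (β (α f))) := by
        rw [map_add, LinearMap.add_apply]
        abel
    _ = 0 := by rw [hβ.2.2, hΔβα, add_zero]

theorem exists_sub_eq_algebraMap [DirectSum.Decomposition ℬ] {ΔX : X →ₗ[ℝ] X}
    (BY : BVAlgebraStr Y ℬ) (hY : IsNonsingularBracket BY.bracket) {α : X ≃ₐ[ℝ] Y} {r r' : Y}
    (h : IsCanonicalWithJacobian 𝒜 ℬ ΔX BY.Δ BY.bracket α r)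
    (h' : IsCanonicalWithJacobian 𝒜 ℬ ΔX BY.Δ BY.bracket α r') :
    ∃ c : ℝ, r - r' = algebraMap ℝ Y c := by
  have hcenter (g : Y) : BY.bracket (r - r') g = 0 := by
    obtain ⟨f, rfl⟩ := α.surjective g
    rw [map_sub, LinearMap.sub_apply, sub_eq_zero]
    exact add_left_cancel ((h.2.2 f).trans (h'.2.2 f).symm)
  exact (hY _).mp (BY.bracket_eq_zero_of_forall_bracket_eq_zero (sub_mem h.2.1 h'.2.1) hcenter)

end IsCanonicalWithJacobian

theorem stmt4_general {X Y Z : Type*} [Ring X] [Algebra ℝ X] [Ring Y] [Algebra ℝ Y]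
    [Ring Z] [Algebra ℝ Z]
    (𝒜 : ℤ → Submodule ℝ X)
    (ℬ : ℤ → Submodule ℝ Y) [GradedAlgebra ℬ]
    (𝒞 : ℤ → Submodule ℝ Z) [GradedAlgebra 𝒞]
    (BX : BVAlgebraStr X 𝒜) (BY : BVAlgebraStr Y ℬ) (BZ : BVAlgebraStr Z 𝒞)
    (hZ : IsNonsingularBracket BZ.bracket)
    (α : X ≃ₐ[ℝ] Y) (β : Y ≃ₐ[ℝ] Z) (ra : Y) (rb : Z)
    (hα : IsCanonicalWithJacobian 𝒜 ℬ BX.Δ BY.Δ BY.bracket α ra)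
    (hβ : IsCanonicalWithJacobian ℬ 𝒞 BY.Δ BZ.Δ BZ.bracket β rb) :
    IsCanonicalWithJacobian 𝒜 𝒞 BX.Δ BZ.Δ BZ.bracket (α.trans β) (rb + β ra) ∧
    (∀ r r' : Z,
      IsCanonicalWithJacobian 𝒜 𝒞 BX.Δ BZ.Δ BZ.bracket (α.trans β) r →
      IsCanonicalWithJacobian 𝒜 𝒞 BX.Δ BZ.Δ BZ.bracket (α.trans β) r' →
      ∃ c : ℝ, r - r' = algebraMap ℝ Z c) :=
  ⟨hα.trans BY BZ hβ, fun _ _ h h' => h.exists_sub_eq_algebraMap BZ hZ h'⟩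

/-- composition of canonical maps is canonical, with logarithmic
Jacobian `r_β + β(r_α)`, unique up to a real multiple of the unit. -/
theorem stmt4 {X Y Z : Type*} [Ring X] [Algebra ℝ X] [Ring Y] [Algebra ℝ Y]
    [Ring Z] [Algebra ℝ Z]
    (𝒜 : ℤ → Submodule ℝ X) [GradedAlgebra 𝒜]
    (ℬ : ℤ → Submodule ℝ Y) [GradedAlgebra ℬ]
    (𝒞 : ℤ → Submodule ℝ Z) [GradedAlgebra 𝒞]
    (BX : BVAlgebraStr X 𝒜) (BY : BVAlgebraStr Y ℬ) (BZ : BVAlgebraStr Z 𝒞)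
    (hX : IsNonsingularBracket BX.bracket) (hY : IsNonsingularBracket BY.bracket)
    (hZ : IsNonsingularBracket BZ.bracket)
    (α : X ≃ₐ[ℝ] Y) (β : Y ≃ₐ[ℝ] Z) (ra : Y) (rb : Z)
    (hα : IsCanonicalWithJacobian 𝒜 ℬ BX.Δ BY.Δ BY.bracket α ra)
    (hβ : IsCanonicalWithJacobian ℬ 𝒞 BY.Δ BZ.Δ BZ.bracket β rb) :
    IsCanonicalWithJacobian 𝒜 𝒞 BX.Δ BZ.Δ BZ.bracket (α.trans β) (rb + β ra) ∧
    (∀ r r' : Z,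
      IsCanonicalWithJacobian 𝒜 𝒞 BX.Δ BZ.Δ BZ.bracket (α.trans β) r →
      IsCanonicalWithJacobian 𝒜 𝒞 BX.Δ BZ.Δ BZ.bracket (α.trans β) r' →
      ∃ c : ℝ, r - r' = algebraMap ℝ Z c) :=
  stmt4_general 𝒜 ℬ 𝒞 BX BY BZ hZ α β ra rb hα hβ
end

section
/- Let X and Y be nonsingular BV algebras, let α : X → Y be a canonical map with logarithmic Jacobian r_α, let S be a BV quantum master action of X, and set α̂S = α(S) + r_α. Then the variation operators transform covariantly: Δ_{Y,α̂S} = α ∘ Δ_{X,S} ∘ α⁻¹, where Δ_{X,S}f = Δ_X f + (S,f)_X and Δ_{Y,α̂S}g = Δ_Y g + (α̂S, g)_Y. -/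
/-! A canonical map intertwines the BV brackets.  Substituting
`Δ_Y ∘ α = α ∘ Δ_X - (r, α ·)_Y` into the defining formula of `(α f, α g)_Y` leaves
`α (f, g)_X` plus the defect of `(r, ·)_Y` from being a graded derivation, and that defect
vanishes because `r` has degree `0` (seven-term identity).  Covariance of the variation
operators then follows by linearity: `(α S + r, α f)_Y = α (S, f)_X + (r, α f)_Y`, and the
second term combines with `Δ_Y (α f)` to `α (Δ_X f)`. -/

namespace BVAlgebraStr

variable {Y : Type*} [Ring Y] [Algebra ℝ Y] {ℬ : ℤ → Submodule ℝ Y}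
  (B : BVAlgebraStr Y ℬ)

theorem bracket_of_mem_zero {r g : Y} {j : ℤ} (hr : r ∈ ℬ 0) (hg : g ∈ ℬ j) :
    B.bracket r g = B.Δ (r * g) - B.Δ r * g - r * B.Δ g := by
  simpa using B.isBracket 0 j r g hr hg

theorem bracket_mul_of_mem_zero_s17 [SetLike.GradedMul ℬ] {r u v : Y} {i k : ℤ}
    (hr : r ∈ ℬ 0) (hu : u ∈ ℬ i) (hv : v ∈ ℬ k) :
    B.bracket r (u * v) = B.bracket r u * v + ((-1 : ℝ) ^ i) • (u * B.bracket r v) := by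
  obtain ⟨hdeg, hseven, -, -⟩ := B.isBVLaplacian
  have hru : u * r = r * u := by simpa using B.grcomm i 0 u r hu hr
  have hΔru : u * B.Δ r = ((-1 : ℝ) ^ i) • (B.Δ r * u) := by
    simpa using B.grcomm i 1 u (B.Δ r) hu (by simpa using hdeg 0 r hr)
  have hsign : ((-1 : ℝ) ^ i) * (-1) ^ i = 1 := by
    rw [← mul_zpow]; norm_num
  have hruv := hseven 0 i k r u v hr hu hv
  simp only [zero_add, one_mul, zpow_zero, one_smul] at hruv
  rw [B.bracket_of_mem_zero hr (SetLike.mul_mem_graded hu hv), B.bracket_of_mem_zero hr hu,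
    B.bracket_of_mem_zero hr hv, ← mul_assoc, hruv]
  simp only [mul_sub, sub_mul, ← mul_assoc, hru, hΔru, smul_mul_assoc,
    smul_sub, smul_smul, hsign, one_smul]
  abel

end BVAlgebraStr

namespace IsCanonicalWithJacobian

variable {X Y : Type*} [Ring X] [Algebra ℝ X] [Ring Y] [Algebra ℝ Y]
  {𝒜 : ℤ → Submodule ℝ X} {ℬ : ℤ → Submodule ℝ Y} {BX : BVAlgebraStr X 𝒜}
  {BY : BVAlgebraStr Y ℬ} {α : X ≃ₐ[ℝ] Y} {r : Y}

theorem map_laplacian_add_bracket_jacobian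
    (hcan : IsCanonicalWithJacobian 𝒜 ℬ BX.Δ BY.Δ BY.bracket α r) (f : X) :
    BY.Δ (α f) + BY.bracket r (α f) = α (BX.Δ f) := by
  rw [← sub_eq_zero, ← hcan.2.2 f]
  abel

theorem map_bracket_of_mem [SetLike.GradedMul ℬ]
    (hcan : IsCanonicalWithJacobian 𝒜 ℬ BX.Δ BY.Δ BY.bracket α r)
    {f g : X} {i j : ℤ} (hf : f ∈ 𝒜 i) (hg : g ∈ 𝒜 j) :
    BY.bracket (α f) (α g) = α (BX.bracket f g) := by
  have hΔ (x : X) : BY.Δ (α x) = α (BX.Δ x) - BY.bracket r (α x) :=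
    eq_sub_of_add_eq (hcan.map_laplacian_add_bracket_jacobian x)
  have hsign : ((-1 : ℝ) ^ i) * (-1) ^ i = 1 := by
    rw [← mul_zpow]; norm_num
  have hαf := hcan.1 i f hf
  rw [BY.isBracket i j _ _ hαf (hcan.1 j g hg), BX.isBracket i j f g hf hg, ← map_mul,
    hΔ (f * g), hΔ f, hΔ g, map_mul α f g,
    BY.bracket_mul_of_mem_zero_s17 hcan.2.1 hαf (hcan.1 j g hg)]
  simp only [map_smul, map_sub, map_mul, sub_mul, mul_sub, smul_sub, smul_add, smul_smul,
    hsign, one_smul]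
  abel

theorem map_bracket_s17 [DirectSum.Decomposition 𝒜] [SetLike.GradedMul ℬ]
    (hcan : IsCanonicalWithJacobian 𝒜 ℬ BX.Δ BY.Δ BY.bracket α r) (f g : X) :
    BY.bracket (α f) (α g) = α (BX.bracket f g) := by
  induction f using DirectSum.Decomposition.inductionOn 𝒜 with
  | zero => simp
  | add f f' hf hf' => simp only [map_add, LinearMap.add_apply, hf, hf']
  | homogeneous f =>
    induction g using DirectSum.Decomposition.inductionOn 𝒜 with
    | zero => simp
    | add g g' hg hg' => simp only [map_add, hg, hg']
    | homogeneous g => exact hcan.map_bracket_of_mem f.2 g.2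

end IsCanonicalWithJacobian

theorem stmt17_general {X Y : Type*} [Ring X] [Algebra ℝ X] [Ring Y] [Algebra ℝ Y]
    (𝒜 : ℤ → Submodule ℝ X) [GradedAlgebra 𝒜]
    (ℬ : ℤ → Submodule ℝ Y) [GradedAlgebra ℬ]
    (BX : BVAlgebraStr X 𝒜) (BY : BVAlgebraStr Y ℬ)
    (α : X ≃ₐ[ℝ] Y) (r : Y)
    (hcan : IsCanonicalWithJacobian 𝒜 ℬ BX.Δ BY.Δ BY.bracket α r)
    (S : X) :
    ∀ g : Y, BY.Δ g + BY.bracket (α S + r) g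
      = α (BX.Δ (α.symm g) + BX.bracket S (α.symm g)) := by
  intro g
  obtain ⟨f, rfl⟩ := α.surjective g
  rw [α.symm_apply_apply, map_add, LinearMap.add_apply, hcan.map_bracket_s17, map_add,
    ← hcan.map_laplacian_add_bracket_jacobian]
  abel

/-- the variation operators transform covariantly:
`Δ_{Y,α̂S} = α ∘ Δ_{X,S} ∘ α⁻¹`. -/
theorem stmt17 {X Y : Type*} [Ring X] [Algebra ℝ X] [Ring Y] [Algebra ℝ Y]
    (𝒜 : ℤ → Submodule ℝ X) [GradedAlgebra 𝒜]
    (ℬ : ℤ → Submodule ℝ Y) [GradedAlgebra ℬ]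
    (BX : BVAlgebraStr X 𝒜) (BY : BVAlgebraStr Y ℬ)
    (hX : IsNonsingularBracket BX.bracket) (hY : IsNonsingularBracket BY.bracket)
    (α : X ≃ₐ[ℝ] Y) (r : Y)
    (hcan : IsCanonicalWithJacobian 𝒜 ℬ BX.Δ BY.Δ BY.bracket α r)
    (S : X) (hS : IsMasterAction BX S) :
    ∀ g : Y, BY.Δ g + BY.bracket (α S + r) g
      = α (BX.Δ (α.symm g) + BX.bracket S (α.symm g)) :=
  stmt17_general 𝒜 ℬ BX BY α r hcan S
end
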